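/- arXiv:2210.00338 — 9 statements merged into one kernel-verified Lean document; each statement's English description precedes it below -/
import Mathlib

section
/- Let G be a triangle-free finite simple graph with vertices x_1, x_2 such that x_1 x_2 is an edge of G and the distance between x_1 and x_2 in the complement of G is at least 3. Then every vertex of G other than x_1 and x_2 is adjacent to exactly one of x_1 and x_2, and consequently G is bipartite with parts N(x_1) and N(x_2). -/
/-- If `G` is triangle-free, `x₁x₂ ∈ E(G)`, and the distance
between `x₁` and `x₂` in the complement is at least 3, then every other vertex
is adjacent to exactly one of `x₁, x₂`, and consequently `G` is bipartite with
parts `N(x₁)` and `N(x₂)`. -/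
theorem stmt4 {V : Type*} [Fintype V] (G : SimpleGraph V)
    (htf : G.CliqueFree 3) (x₁ x₂ : V) (hadj : G.Adj x₁ x₂)
    (hdist : 3 ≤ Gᶜ.edist x₁ x₂) :
    (∀ v : V, v ≠ x₁ → v ≠ x₂ → (G.Adj v x₁ ↔ ¬ G.Adj v x₂)) ∧
    (∀ v : V, v ∈ G.neighborSet x₁ ∪ G.neighborSet x₂) ∧
    (∀ u v, u ∈ G.neighborSet x₁ → v ∈ G.neighborSet x₁ → ¬ G.Adj u v) ∧
    (∀ u v, u ∈ G.neighborSet x₂ → v ∈ G.neighborSet x₂ → ¬ G.Adj u v) ∧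
    G.Colorable 2 := by
  classical
  have htri : ∀ a b c : V, G.Adj a b → G.Adj a c → G.Adj b c → False := by
    intro a b c h1 h2 h3
    exact htf _ (SimpleGraph.is3Clique_triple_iff.2 ⟨h1, h2, h3⟩)
  -- no vertex is complement-adjacent to both x₁ and x₂
  have hkey : ∀ v : V, v ≠ x₁ → v ≠ x₂ → G.Adj x₁ v ∨ G.Adj x₂ v := by
    intro v h1 h2
    by_contra h
    push_neg at h
    have c1 : Gᶜ.Adj x₁ v := ⟨fun he => h1 he.symm, h.1⟩
    have c2 : Gᶜ.Adj v x₂ := ⟨h2, fun ha => h.2 ha.symm⟩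
    have : Gᶜ.edist x₁ x₂ ≤ 2 := by
      have := SimpleGraph.Walk.edist_le (c1.toWalk.append c2.toWalk)
      simpa using this
    exact (by norm_num : ¬(3:ℕ∞) ≤ 2) (hdist.trans this)
  have hunion : ∀ v : V, v ∈ G.neighborSet x₁ ∪ G.neighborSet x₂ := by
    intro v
    by_cases h1 : v = x₁
    · exact Or.inr (by simpa [h1] using hadj.symm)
    by_cases h2 : v = x₂
    · exact Or.inl (by simpa [h2] using hadj)
    · exact hkey v h1 h2
  have hiff : ∀ v : V, v ≠ x₁ → v ≠ x₂ → (G.Adj v x₁ ↔ ¬ G.Adj v x₂) := by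
    intro v h1 h2
    constructor
    · intro ha hb
      exact htri x₁ x₂ v hadj ha.symm hb.symm
    · intro hb
      rcases hkey v h1 h2 with h | h
      · exact h.symm
      · exact absurd h.symm hb
  refine ⟨hiff, hunion, ?_, ?_, ?_⟩
  · intro u v hu hv huv
    exact htri x₁ u v hu hv huv
  · intro u v hu hv huv
    exact htri x₂ u v hu hv huv
  · refine ⟨fun v => if G.Adj x₁ v then 0 else 1, ?_⟩
    intro u v huv
    by_cases h1 : G.Adj x₁ u <;> by_cases h2 : G.Adj x₁ v <;> simp [h1, h2]
    · exact htri x₁ u v h1 h2 huv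
    · have hu2 : G.Adj x₂ u := (hunion u).resolve_left h1
      have hv2 : G.Adj x₂ v := (hunion v).resolve_left h2
      exact htri x₂ u v hu2 hv2 huv
end

section
/- Let G be a triangle-free finite simple graph of diameter 3 with a cut vertex x. Then G - x has exactly one nontrivial component. -/
/-!
Write `G - x` for the graph induced on `{x}ᶜ`. If `G - x` had no edge, then every vertex would be
adjacent to `x` and the diameter would be at most `2`. Triangle-freeness gives every edge of
`G - x` an endpoint `u` not adjacent to `x`, so `d(u, x) ≥ 2`. For two such vertices `u`, `v`
a shortest `u`–`v` path through `x` would have length at least `4 > 3`, so `u` and `v` are joined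
in `G - x` and all edges of `G - x` lie in one component.
-/

namespace SimpleGraph

variable {V : Type*} {G : SimpleGraph V} {x : V}

lemma CliqueFree.not_adj_or_not_adj_of_adj (htf : G.CliqueFree 3) {p q : V} (hpq : G.Adj p q)
    (x : V) : ¬G.Adj x p ∨ ¬G.Adj x q := by
  classical
  by_contra! h
  exact htf _ (is3Clique_triple_iff.mpr ⟨h.1, h.2, hpq⟩)

lemma two_le_edist_of_ne_of_not_adj {u v : V} (hne : u ≠ v) (hnadj : ¬G.Adj u v) :
    2 ≤ G.edist u v := by
  have h : ¬G.edist u v ≤ 1 := by rw [edist_le_one_iff_adj_or_eq]; tauto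
  exact Order.add_one_le_of_lt (not_le.mp h)

lemma ediam_le_two_of_forall_adj (hx : ∀ v, v ≠ x → G.Adj v x) : G.ediam ≤ 2 := by
  have hle : ∀ v, G.edist v x ≤ 1 := fun v ↦ by
    rw [edist_le_one_iff_adj_or_eq]
    by_cases hv : v = x
    · exact .inr hv
    · exact .inl (hx v hv)
  refine ediam_le_of_edist_le fun u v ↦ ?_
  calc G.edist u v ≤ G.edist u x + G.edist x v := G.edist_triangle
    _ ≤ 1 + 1 := add_le_add (hle u) (edist_comm ▸ hle v)
    _ = 2 := one_add_one_eq_two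

lemma Preconnected.adj_of_induce_compl_singleton_eq_bot (hG : G.Preconnected)
    (hbot : G.induce ({x}ᶜ : Set V) = ⊥) {v : V} (hv : v ≠ x) : G.Adj v x := by
  obtain ⟨w⟩ := hG v x
  cases w with
  | nil => exact absurd rfl hv
  | @cons _ b _ hvb _ =>
    by_cases hb : b = x
    · exact hb ▸ hvb
    · have hadj : (G.induce ({x}ᶜ : Set V)).Adj ⟨v, hv⟩ ⟨b, hb⟩ := hvb
      simp [hbot] at hadj

variable (x) in
lemma induce_compl_singleton_ne_bot (h2 : 2 < G.ediam) (htop : G.ediam ≠ ⊤) :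
    G.induce ({x}ᶜ : Set V) ≠ ⊥ := fun hbot ↦
  (ediam_le_two_of_forall_adj fun _ ↦
    (preconnected_of_ediam_ne_top htop).adj_of_induce_compl_singleton_eq_bot hbot).not_gt h2

lemma reachable_induce_compl_singleton_of_edist_lt {u v : V} (hu : u ∈ ({x}ᶜ : Set V))
    (hv : v ∈ ({x}ᶜ : Set V)) (h : G.edist u v < G.edist u x + G.edist x v) :
    (G.induce ({x}ᶜ : Set V)).Reachable ⟨u, hu⟩ ⟨v, hv⟩ := by
  classical
  obtain ⟨w, hw⟩ := (reachable_of_edist_ne_top h.ne_top).exists_walk_length_eq_edist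
  by_cases hx : x ∈ w.support
  · have hsplit : (w.takeUntil x hx).length + (w.dropUntil x hx).length = w.length := by
      rw [← Walk.length_append, Walk.take_spec]
    have hge : G.edist u x + G.edist x v ≤ G.edist u v := by
      rw [← hw, ← hsplit, Nat.cast_add]
      exact add_le_add (edist_le _) (edist_le _)
    exact absurd h hge.not_gt
  · exact ⟨w.induce _ fun y hy (hyx : y = x) ↦ hx (hyx ▸ hy)⟩

lemma exists_not_adj_connectedComponentMk_eq (htf : G.CliqueFree 3) {a b : ({x}ᶜ : Set V)}
    (hab : (G.induce ({x}ᶜ : Set V)).Adj a b) :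
    ∃ u : ({x}ᶜ : Set V), ¬G.Adj x u ∧
      (G.induce ({x}ᶜ : Set V)).connectedComponentMk u =
        (G.induce ({x}ᶜ : Set V)).connectedComponentMk a := by
  rcases htf.not_adj_or_not_adj_of_adj hab x with hxa | hxb
  · exact ⟨a, hxa, rfl⟩
  · exact ⟨b, hxb, (ConnectedComponent.connectedComponentMk_eq_of_adj hab).symm⟩

lemma reachable_induce_compl_singleton_of_not_adj (hdiam : G.ediam ≤ 3) {u v : ({x}ᶜ : Set V)}
    (hxu : ¬G.Adj x u) (hxv : ¬G.Adj x v) : (G.induce ({x}ᶜ : Set V)).Reachable u v := by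
  have hdux : 2 ≤ G.edist u x := two_le_edist_of_ne_of_not_adj u.2 (fun h ↦ hxu h.symm)
  have hdxv : 2 ≤ G.edist x v := two_le_edist_of_ne_of_not_adj (fun h ↦ v.2 h.symm) hxv
  refine reachable_induce_compl_singleton_of_edist_lt u.2 v.2 ?_
  calc G.edist u v ≤ 3 := edist_le_ediam.trans hdiam
    _ < 2 + 2 := by decide
    _ ≤ G.edist u x + G.edist x v := add_le_add hdux hdxv

lemma connectedComponentMk_eq_of_adj_of_adj (htf : G.CliqueFree 3) (hdiam : G.ediam ≤ 3)
    {a b a' b' : ({x}ᶜ : Set V)} (hab : (G.induce ({x}ᶜ : Set V)).Adj a b)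
    (hab' : (G.induce ({x}ᶜ : Set V)).Adj a' b') :
    (G.induce ({x}ᶜ : Set V)).connectedComponentMk a' =
      (G.induce ({x}ᶜ : Set V)).connectedComponentMk a := by
  obtain ⟨u, hxu, hu⟩ := exists_not_adj_connectedComponentMk_eq htf hab
  obtain ⟨v, hxv, hv⟩ := exists_not_adj_connectedComponentMk_eq htf hab'
  rw [← hu, ← hv]
  exact ConnectedComponent.sound (reachable_induce_compl_singleton_of_not_adj hdiam hxv hxu)

end SimpleGraph

open SimpleGraph in
theorem stmt5_general {V : Type*} (G : SimpleGraph V)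
    (htf : G.CliqueFree 3) (hdiam : G.diam = 3) (x : V) :
    ∃! c : (G.induce ({x}ᶜ : Set V)).ConnectedComponent,
      ∃ a b : ({x}ᶜ : Set V), (G.induce ({x}ᶜ : Set V)).Adj a b ∧
        (G.induce ({x}ᶜ : Set V)).connectedComponentMk a = c := by
  have htop : G.ediam ≠ ⊤ := ediam_ne_top_of_diam_ne_zero (by omega)
  have hediam : G.ediam = 3 := by rw [← ENat.natCast_toNat htop]; exact congrArg _ hdiam
  obtain ⟨a, b, hab⟩ := ne_bot_iff_exists_adj.mp
    (induce_compl_singleton_ne_bot x (by rw [hediam]; decide) htop)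
  refine ⟨_, ⟨a, b, hab, rfl⟩, ?_⟩
  rintro _ ⟨a', b', hab', rfl⟩
  exact connectedComponentMk_eq_of_adj_of_adj htf hediam.le hab hab'

/-- A triangle-free graph of diameter 3 with a cut vertex `x` has
exactly one nontrivial (edge-containing) component after deleting `x`. -/
theorem stmt5 {V : Type*} [Fintype V] (G : SimpleGraph V)
    (htf : G.CliqueFree 3) (hdiam : G.diam = 3) (x : V)
    (hcut : ¬ (G.induce ({x}ᶜ : Set V)).Connected) :
    ∃! c : (G.induce ({x}ᶜ : Set V)).ConnectedComponent,
      ∃ a b : ({x}ᶜ : Set V), (G.induce ({x}ᶜ : Set V)).Adj a b ∧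
        (G.induce ({x}ᶜ : Set V)).connectedComponentMk a = c :=
  stmt5_general G htf hdiam x
end

section
/- Let G be a triangle-free finite simple graph with two cut vertices x and y, and suppose G - x has a nontrivial component C_x not containing y and G - y has a nontrivial component C_y not containing x, with C_x and C_y disjoint. Then the diameter of G is at least 4. -/
open SimpleGraph

lemma reach_induce {V : Type*} {G : SimpleGraph V} {s : Set V} :
    ∀ {u v : V} (p : G.Walk u v) (hp : ∀ w ∈ p.support, w ∈ s),
    (G.induce s).Reachable ⟨u, hp u p.start_mem_support⟩ ⟨v, hp v p.end_mem_support⟩ := by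
  intro u v p
  induction p with
  | nil => intro hp; rfl
  | @cons u u' v h q ih =>
    intro hp
    have hadj : (G.induce s).Adj ⟨u, hp u (by simp)⟩ ⟨u', hp u' (by simp)⟩ := h
    exact Reachable.trans hadj.reachable (ih fun w hw => hp w (by simp [hw]))

lemma two_le_length {V : Type*} {G : SimpleGraph V} {u v : V} (p : G.Walk u v)
    (hne : u ≠ v) (hadj : ¬ G.Adj u v) : 2 ≤ p.length := by
  by_contra h
  interval_cases hl : p.length
  · exact hne (SimpleGraph.Walk.eq_of_length_eq_zero hl)
  · exact hadj (SimpleGraph.Walk.adj_of_length_eq_one hl)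


/-- A triangle-free graph cannot have diameter less than 4 if there
are cut vertices `x`, `y` such that `G - x` has a nontrivial component `C_x` not
containing `y`, `G - y` has a nontrivial component `C_y` not containing `x`, and
`C_x`, `C_y` are disjoint. -/
theorem stmt8 {V : Type*} [Fintype V] (G : SimpleGraph V)
    (htf : G.CliqueFree 3) (x y : V)
    (hx : ¬ (G.induce ({x}ᶜ : Set V)).Connected)
    (hy : ¬ (G.induce ({y}ᶜ : Set V)).Connected)
    (a b : ({x}ᶜ : Set V)) (hab : (G.induce ({x}ᶜ : Set V)).Adj a b)
    (hay : ∀ w : ({x}ᶜ : Set V),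
      (G.induce ({x}ᶜ : Set V)).Reachable a w → (w : V) ≠ y)
    (c d : ({y}ᶜ : Set V)) (hcd : (G.induce ({y}ᶜ : Set V)).Adj c d)
    (hcx : ∀ w : ({y}ᶜ : Set V),
      (G.induce ({y}ᶜ : Set V)).Reachable c w → (w : V) ≠ x)
    (hdisj : ∀ (w : ({x}ᶜ : Set V)) (z : ({y}ᶜ : Set V)),
      (G.induce ({x}ᶜ : Set V)).Reachable a w →
      (G.induce ({y}ᶜ : Set V)).Reachable c z → (w : V) ≠ (z : V)) :
    4 ≤ G.ediam := by
  classical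
  -- triangle-free helper
  have htri : ∀ u v w : V, G.Adj u v → G.Adj u w → G.Adj v w → False := by
    intro u v w h1 h2 h3
    exact htf ({u, v, w} : Finset V) (is3Clique_triple_iff.mpr ⟨h1, h2, h3⟩)
  have hab' : G.Adj (a : V) (b : V) := hab
  have hcd' : G.Adj (c : V) (d : V) := hcd
  -- pick a' ∈ {a,b} nonadjacent to x
  obtain ⟨a', haa', hax⟩ : ∃ a' : ({x}ᶜ : Set V),
      (G.induce ({x}ᶜ : Set V)).Reachable a a' ∧ ¬ G.Adj (a' : V) x := by
    by_cases h : G.Adj (a : V) x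
    · exact ⟨b, hab.reachable, fun h' => htri x a b h.symm h'.symm hab'⟩
    · exact ⟨a, Reachable.refl a, h⟩
  -- pick c' ∈ {c,d} nonadjacent to y
  obtain ⟨c', hcc', hcy⟩ : ∃ c' : ({y}ᶜ : Set V),
      (G.induce ({y}ᶜ : Set V)).Reachable c c' ∧ ¬ G.Adj (c' : V) y := by
    by_cases h : G.Adj (c : V) y
    · exact ⟨d, hcd.reachable, fun h' => htri y c d h.symm h'.symm hcd'⟩
    · exact ⟨c, Reachable.refl c, h⟩
  have ha'x : (a' : V) ≠ x := a'.2
  have hc'y : (c' : V) ≠ y := c'.2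
  have hc'x : (c' : V) ≠ x := hcx c' hcc'
  -- suffices: every walk from a' to c' has length ≥ 4
  have key : ∀ p : G.Walk (a' : V) (c' : V), 4 ≤ p.length := by
    intro p
    -- x must be on p
    have hxs : x ∈ p.support := by
      by_contra hxs
      have hsub : ∀ w ∈ p.support, w ∈ ({x}ᶜ : Set V) := by
        intro w hw
        simp only [Set.mem_compl_iff, Set.mem_singleton_iff]
        exact fun hwx => hxs (hwx ▸ hw)
      have := reach_induce p hsub
      exact hdisj ⟨(c' : V), hsub _ p.end_mem_support⟩ c'
        (haa'.trans (by convert this using 2)) hcc' rfl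
    have hsplit := p.take_spec hxs
    have hlen : p.length = (p.takeUntil x hxs).length + (p.dropUntil x hxs).length := by
      conv_lhs => rw [← hsplit]
      exact Walk.length_append _ _
    have h1 : 2 ≤ (p.takeUntil x hxs).length := two_le_length _ ha'x hax
    have h2 : 2 ≤ (p.dropUntil x hxs).length := by
      set q := p.dropUntil x hxs with hq
      by_cases hxy : x = y
      · subst hxy
        exact two_le_length q (fun h => hc'y h.symm) (fun h => hcy h.symm)
      · -- y must be on q
        have hys : y ∈ q.support := by
          by_contra hys
          have hsub : ∀ w ∈ q.reverse.support, w ∈ ({y}ᶜ : Set V) := by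
            intro w hw
            simp only [Set.mem_compl_iff, Set.mem_singleton_iff]
            rw [Walk.support_reverse, List.mem_reverse] at hw
            exact fun hwy => hys (hwy ▸ hw)
          have := reach_induce q.reverse hsub
          exact hcx ⟨x, hsub _ q.reverse.end_mem_support⟩
            (hcc'.trans (Reachable.trans (by exact Reachable.refl _) (by convert this using 2))) rfl
        have hsplit2 := q.take_spec hys
        have hlen2 : q.length = (q.takeUntil y hys).length + (q.dropUntil y hys).length := by
          conv_lhs => rw [← hsplit2]
          exact Walk.length_append _ _
        have g1 : 1 ≤ (q.takeUntil y hys).length :=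
          Nat.one_le_iff_ne_zero.mpr fun h => hxy (Walk.eq_of_length_eq_zero h)
        have g2 : 1 ≤ (q.dropUntil y hys).length :=
          Nat.one_le_iff_ne_zero.mpr fun h => hc'y.symm (Walk.eq_of_length_eq_zero h)
        omega
    omega
  -- conclude
  calc (4 : ℕ∞) ≤ G.edist (a' : V) (c' : V) := by
        rw [edist_eq_sInf]
        refine le_sInf ?_
        rintro b ⟨p, rfl⟩
        show (4 : ℕ∞) ≤ (p.length : ℕ∞)
        exact_mod_cast key p
    _ ≤ G.ediam := edist_le_ediam
end

section
/- Let G be a triangle-free finite simple graph of diameter 2 and let uv be an edge of G. Then in the graph G - uv, the distance between u and v is at least 3, and moreover any pair of vertices x, y with distance at least 3 in G - uv satisfies: x = u and y ∈ N_G[v], or x = v and y ∈ N_G[u] (up to swapping x and y). -/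
private lemma stmt10_walk2 {V : Type*} {G : SimpleGraph V} {x y : V}
    (p : G.Walk x y) (h : p.length = 2) : ∃ w, G.Adj x w ∧ G.Adj w y := by
  cases p with
  | nil => simp at h
  | cons h1 q =>
    cases q with
    | nil => simp at h
    | cons h2 r =>
      have hr : r.length = 0 := by
        simp only [SimpleGraph.Walk.length_cons] at h; omega
      have := SimpleGraph.Walk.eq_of_length_eq_zero hr
      subst this
      exact ⟨_, h1, h2⟩

open SimpleGraph in
/-- If `edist ≥ 3` after deleting `s(u,v)`, then any `G`-edge between the two
vertices must be the deleted edge. -/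
private lemma stmt10_aux {V : Type*} (G : SimpleGraph V) (u v x y : V)
    (h3 : 3 ≤ (G.deleteEdges {s(u, v)}).edist x y) (hxy : G.Adj x y) :
    s(x, y) = s(u, v) := by
  by_contra h
  have hadj : (G.deleteEdges {s(u, v)}).Adj x y := by
    rw [SimpleGraph.deleteEdges_adj]
    exact ⟨hxy, by simpa using h⟩
  have h1 : (G.deleteEdges {s(u, v)}).edist x y ≤ 1 := by
    simpa using hadj.toWalk.edist_le
  have := h3.trans h1
  norm_num at this

/-- In a triangle-free graph of diameter 2 with edge `uv`, the
distance between `u` and `v` in `G - uv` is at least 3, and any pair `x, y`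
at distance at least 3 in `G - uv` satisfies `x = u ∧ y ∈ N_G[v]`, or
`x = v ∧ y ∈ N_G[u]`, up to swapping `x` and `y`. -/
theorem stmt10 {V : Type*} [Fintype V] (G : SimpleGraph V)
    (htf : G.CliqueFree 3) (hdiam : G.diam = 2) (u v : V) (huv : G.Adj u v) :
    3 ≤ (G.deleteEdges {s(u, v)}).edist u v ∧
    ∀ x y : V, 3 ≤ (G.deleteEdges {s(u, v)}).edist x y →
      (x = u ∧ (y = v ∨ G.Adj v y)) ∨ (x = v ∧ (y = u ∨ G.Adj u y)) ∨
      (y = u ∧ (x = v ∨ G.Adj v x)) ∨ (y = v ∧ (x = u ∨ G.Adj u x)) := by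
  classical
  have hne : G.ediam ≠ ⊤ := by
    intro h
    rw [SimpleGraph.diam, h] at hdiam
    simp at hdiam
  have hedist2 : ∀ a b : V, G.edist a b ≤ 2 := by
    intro a b
    have h1 : G.edist a b ≤ G.ediam := SimpleGraph.edist_le_ediam
    have h2 : G.ediam = 2 := by
      have := ENat.coe_toNat hne
      rw [SimpleGraph.diam] at hdiam
      rw [hdiam] at this
      exact this.symm
    rw [h2] at h1
    exact h1
  constructor
  · -- part 1
    by_contra h
    push_neg at h
    have h2 : (G.deleteEdges {s(u, v)}).edist u v ≤ 2 :=
      Order.le_of_lt_add_one (by norm_num at h ⊢; exact h)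
    have hnetop : (G.deleteEdges {s(u, v)}).edist u v ≠ ⊤ := by
      intro ht; rw [ht] at h2; exact absurd h2 (by norm_num)
    obtain ⟨p, hp⟩ := SimpleGraph.exists_walk_of_edist_ne_top hnetop
    have hlen : p.length ≤ 2 := by
      have := hp.le.trans h2
      exact_mod_cast this
    have hcases : p.length = 0 ∨ p.length = 1 ∨ p.length = 2 := by omega
    rcases hcases with h0 | h1 | h2'
    · exact G.irrefl (SimpleGraph.Walk.eq_of_length_eq_zero h0 ▸ huv)
    · have := SimpleGraph.Walk.adj_of_length_eq_one h1
      rw [SimpleGraph.deleteEdges_adj] at this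
      exact this.2 (by simp)
    · obtain ⟨w, hw1, hw2⟩ := stmt10_walk2 p h2'
      rw [SimpleGraph.deleteEdges_adj] at hw1 hw2
      exact htf {u, w, v} (SimpleGraph.is3Clique_triple_iff.mpr ⟨hw1.1, huv, hw2.1⟩)
  · -- part 2
    intro x y h3
    have hxy : x ≠ y := by
      intro h; subst h
      rw [SimpleGraph.edist_self] at h3
      exact absurd h3 (by norm_num)
    have hGne : G.edist x y ≠ ⊤ := fun ht => by
      have := hedist2 x y; rw [ht] at this; exact absurd this (by norm_num)
    obtain ⟨p, hp⟩ := SimpleGraph.exists_walk_of_edist_ne_top hGne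
    have hlen : p.length ≤ 2 := by
      have := hp.le.trans (hedist2 x y)
      exact_mod_cast this
    have hcases : p.length = 0 ∨ p.length = 1 ∨ p.length = 2 := by omega
    rcases hcases with h0 | h1 | h2'
    · exact absurd (SimpleGraph.Walk.eq_of_length_eq_zero h0) hxy
    · have hadj := SimpleGraph.Walk.adj_of_length_eq_one h1
      have := stmt10_aux G u v x y h3 hadj
      rw [Sym2.eq_iff] at this
      rcases this with ⟨hx, hy⟩ | ⟨hx, hy⟩
      · exact Or.inl ⟨hx, Or.inl hy⟩
      · exact Or.inr (Or.inl ⟨hx, Or.inl hy⟩)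
    · obtain ⟨w, hw1, hw2⟩ := stmt10_walk2 p h2'
      have hkey : s(x, w) = s(u, v) ∨ s(w, y) = s(u, v) := by
        by_contra h
        push_neg at h
        have ha1 : (G.deleteEdges {s(u, v)}).Adj x w := by
          rw [SimpleGraph.deleteEdges_adj]
          exact ⟨hw1, by simpa using h.1⟩
        have ha2 : (G.deleteEdges {s(u, v)}).Adj w y := by
          rw [SimpleGraph.deleteEdges_adj]
          exact ⟨hw2, by simpa using h.2⟩
        have hle : (G.deleteEdges {s(u, v)}).edist x y ≤ 2 := by
          simpa using (SimpleGraph.Walk.cons ha1 (SimpleGraph.Walk.cons ha2 SimpleGraph.Walk.nil)).edist_le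
        have := h3.trans hle
        norm_num at this
      rcases hkey with hk | hk <;> rw [Sym2.eq_iff] at hk
      · rcases hk with ⟨hx, hw⟩ | ⟨hx, hw⟩
        · subst hx; subst hw
          exact Or.inl ⟨rfl, Or.inr hw2⟩
        · subst hx; subst hw
          exact Or.inr (Or.inl ⟨rfl, Or.inr hw2⟩)
      · rcases hk with ⟨hw, hy⟩ | ⟨hw, hy⟩
        · subst hw; subst hy
          exact Or.inr (Or.inr (Or.inr ⟨rfl, Or.inr hw1.symm⟩))
        · subst hw; subst hy
          exact Or.inr (Or.inr (Or.inl ⟨rfl, Or.inr hw1.symm⟩))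
end

section
/- Let G be a triangle-free finite simple graph of diameter 2, κ(G) = 3, and cut set S = {x_1, x_2, x_3} of size 3, and let C be the unique nontrivial component of G - S. Then no vertex of C has empty neighborhood in S, and no vertex of C is adjacent to all three vertices of S. -/
/-- Auxiliary lemma: in a graph of finite diameter ≤ 2, if `v` and `u` lie in
different components of `G - S` and `v` has no neighbor in `S`, contradiction. -/
lemma stmt11_aux {V : Type*} (G : SimpleGraph V)
    (hediam : G.ediam ≠ ⊤) (hdist : ∀ u v : V, G.dist u v ≤ 2)
    (S : Set V) (v u : (Sᶜ : Set V))
    (hnr : ¬ (G.induce Sᶜ).Reachable v u)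
    (hno : ∀ m : V, m ∈ S → ¬ G.Adj (v : V) m) : False := by
  have hreach : G.Reachable (v : V) (u : V) := by
    apply G.reachable_of_edist_ne_top
    intro h
    exact hediam (top_le_iff.mp (h ▸ G.edist_le_ediam (u := (v : V)) (v := (u : V))))
  have hvu : (v : V) ≠ (u : V) := by
    intro h
    exact hnr (by rw [Subtype.ext h])
  obtain ⟨p, hp⟩ := hreach.exists_walk_length_eq_dist
  have hlen : p.length ≤ 2 := hp ▸ hdist _ _
  have hadjH : ∀ (x y : V) (hx : x ∈ Sᶜ) (hy : y ∈ Sᶜ), G.Adj x y →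
      (G.induce Sᶜ).Adj ⟨x, hx⟩ ⟨y, hy⟩ := fun _ _ _ _ h => h
  interval_cases h : p.length
  · exact hvu (SimpleGraph.Walk.eq_of_length_eq_zero h)
  · have hadj : G.Adj (v : V) (u : V) := by
      have h1 := p.adj_getVert_succ (i := 0) (by omega)
      rw [SimpleGraph.Walk.getVert_zero] at h1
      have h2 : p.getVert 1 = (u : V) := by
        have := p.getVert_length; rwa [h] at this
      rwa [h2] at h1
    exact hnr (SimpleGraph.Adj.reachable (hadjH _ _ v.2 u.2 hadj))
  · set m := p.getVert 1 with hm
    have hadj1 : G.Adj (v : V) m := by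
      have := p.adj_getVert_succ (i := 0) (by omega)
      rwa [SimpleGraph.Walk.getVert_zero] at this
    have hadj2 : G.Adj m (u : V) := by
      have h1 := p.adj_getVert_succ (i := 1) (by omega)
      have h2 : p.getVert 2 = (u : V) := by
        have := p.getVert_length; rwa [h] at this
      rwa [h2] at h1
    by_cases hmS : m ∈ S
    · exact hno m hmS hadj1
    · exact hnr ((SimpleGraph.Adj.reachable (hadjH _ _ v.2 hmS hadj1)).trans
        (SimpleGraph.Adj.reachable (hadjH _ _ hmS u.2 hadj2)))

/-- `G` triangle-free of diameter 2 with connectivity 3,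
`S = {x₁, x₂, x₃}` a cut set of size 3, and `C` the unique nontrivial component
of `G - S`. Then no vertex of `C` has empty neighborhood in `S`, and no vertex
of `C` is adjacent to all three vertices of `S`. -/
theorem stmt11 {V : Type*} [Fintype V] (G : SimpleGraph V)
    (htf : G.CliqueFree 3) (hdiam : G.diam = 2)
    (x₁ x₂ x₃ : V) (h12 : x₁ ≠ x₂) (h13 : x₁ ≠ x₃) (h23 : x₂ ≠ x₃)
    (hκ : ∀ T : Finset V, ¬ (G.induce ((↑T : Set V)ᶜ)).Connected → 3 ≤ T.card)
    (hcut : ¬ (G.induce (({x₁, x₂, x₃} : Set V)ᶜ)).Connected)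
    (a b : (({x₁, x₂, x₃} : Set V)ᶜ : Set V))
    (hab : ¬ (G.induce (({x₁, x₂, x₃} : Set V)ᶜ)).Reachable a b)
    (c : (G.induce (({x₁, x₂, x₃} : Set V)ᶜ)).ConnectedComponent)
    (hc : ∃ p q : (({x₁, x₂, x₃} : Set V)ᶜ : Set V),
      (G.induce (({x₁, x₂, x₃} : Set V)ᶜ)).Adj p q ∧
      (G.induce (({x₁, x₂, x₃} : Set V)ᶜ)).connectedComponentMk p = c)
    (huniq : ∀ p q : (({x₁, x₂, x₃} : Set V)ᶜ : Set V),
      (G.induce (({x₁, x₂, x₃} : Set V)ᶜ)).Adj p q →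
      (G.induce (({x₁, x₂, x₃} : Set V)ᶜ)).connectedComponentMk p = c) :
    ∀ w : (({x₁, x₂, x₃} : Set V)ᶜ : Set V),
      (G.induce (({x₁, x₂, x₃} : Set V)ᶜ)).connectedComponentMk w = c →
      (G.Adj (w : V) x₁ ∨ G.Adj (w : V) x₂ ∨ G.Adj (w : V) x₃) ∧
      ¬ (G.Adj (w : V) x₁ ∧ G.Adj (w : V) x₂ ∧ G.Adj (w : V) x₃) := by
  classical
  have hediam : G.ediam ≠ ⊤ := by
    intro h
    rw [SimpleGraph.diam, h] at hdiam
    simp at hdiam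
  have hdist : ∀ u v : V, G.dist u v ≤ 2 := by
    intro u v
    have := G.dist_le_diam hediam (u := u) (v := v)
    omega
  have key : ∀ v : (({x₁, x₂, x₃} : Set V)ᶜ : Set V),
      (G.induce (({x₁, x₂, x₃} : Set V)ᶜ)).connectedComponentMk v = c →
      G.Adj (v : V) x₁ ∨ G.Adj (v : V) x₂ ∨ G.Adj (v : V) x₃ := by
    intro v hv
    by_contra hno
    push_neg at hno
    obtain ⟨hn1, hn2, hn3⟩ := hno
    have hane : (G.induce (({x₁, x₂, x₃} : Set V)ᶜ)).connectedComponentMk a ≠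
        (G.induce (({x₁, x₂, x₃} : Set V)ᶜ)).connectedComponentMk b := by
      intro h
      exact hab (SimpleGraph.ConnectedComponent.exact h)
    obtain ⟨u, hu⟩ : ∃ u : (({x₁, x₂, x₃} : Set V)ᶜ : Set V),
        (G.induce (({x₁, x₂, x₃} : Set V)ᶜ)).connectedComponentMk u ≠ c := by
      by_cases h : (G.induce (({x₁, x₂, x₃} : Set V)ᶜ)).connectedComponentMk a = c
      · exact ⟨b, fun hb => hane (h.trans hb.symm)⟩
      · exact ⟨a, h⟩
    have hnr : ¬ (G.induce (({x₁, x₂, x₃} : Set V)ᶜ)).Reachable v u := by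
      intro h
      exact hu ((SimpleGraph.ConnectedComponent.sound h.symm).trans hv)
    refine stmt11_aux G hediam hdist {x₁, x₂, x₃} v u hnr ?_
    intro m hm
    rcases hm with rfl | rfl | rfl
    exacts [hn1, hn2, hn3]
  intro w hw
  refine ⟨key w hw, ?_⟩
  rintro ⟨hA1, hA2, hA3⟩
  obtain ⟨p', q', hpq, hp'⟩ := hc
  have hz : ∃ z : (({x₁, x₂, x₃} : Set V)ᶜ : Set V),
      (G.induce (({x₁, x₂, x₃} : Set V)ᶜ)).Adj w z := by
    by_cases hwp : w = p'
    · exact ⟨q', hwp ▸ hpq⟩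
    · obtain ⟨pw⟩ := SimpleGraph.ConnectedComponent.exact (hw.trans hp'.symm)
      exact ⟨pw.getVert 1, pw.adj_snd (SimpleGraph.Walk.not_nil_of_ne hwp)⟩
  obtain ⟨z, hwz⟩ := hz
  have hzc := huniq z w hwz.symm
  have hzG : G.Adj (w : V) (z : V) := hwz
  rcases key z hzc with hzx | hzx | hzx
  · exact htf {(w : V), (z : V), x₁}
      (SimpleGraph.is3Clique_triple_iff.mpr ⟨hzG, hA1, hzx⟩)
  · exact htf {(w : V), (z : V), x₂}
      (SimpleGraph.is3Clique_triple_iff.mpr ⟨hzG, hA2, hzx⟩)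
  · exact htf {(w : V), (z : V), x₃}
      (SimpleGraph.is3Clique_triple_iff.mpr ⟨hzG, hA3, hzx⟩)
end

section
/- Let G be a triangle-free finite simple graph of diameter 3 such that the complement of G also has diameter 3, with connectivity at least 3. Then G is bipartite. -/
/-- A triangle-free graph `G` with `diam(G) = diam(Gᶜ) = 3` and
connectivity at least 3 is bipartite. -/
theorem stmt12 {V : Type*} [Fintype V] (G : SimpleGraph V)
    (htf : G.CliqueFree 3) (hdiam : G.diam = 3) (hdiamc : Gᶜ.diam = 3)
    (hκ : ∀ T : Finset V, ¬ (G.induce ((↑T : Set V)ᶜ)).Connected → 3 ≤ T.card) :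
    G.Colorable 2 := by
  classical
  cases isEmpty_or_nonempty V with
  | inl h =>
    exact ⟨⟨fun v => isEmptyElim v, fun {a} => isEmptyElim a⟩⟩
  | inr h =>
    obtain ⟨u, v, huv⟩ := Gᶜ.exists_dist_eq_diam
    rw [hdiamc] at huv
    have hne : u ≠ v := by rintro rfl; rw [SimpleGraph.dist_self] at huv; omega
    have hnadj : ¬ Gᶜ.Adj u v := fun hadj => by
      rw [SimpleGraph.dist_eq_one_iff_adj.mpr hadj] at huv; omega
    have hadj : G.Adj u v := by
      by_cases h : G.Adj u v
      · exact h
      · exact absurd ((G.compl_adj u v).mpr ⟨hne, h⟩) hnadj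
    -- every w ≠ u, v is G-adjacent to u or to v
    have hkey : ∀ w, w ≠ u → w ≠ v → G.Adj u w ∨ G.Adj v w := by
      intro w hwu hwv
      by_contra hcon
      push_neg at hcon
      have h1 : Gᶜ.Adj u w := (G.compl_adj u w).mpr ⟨Ne.symm hwu, hcon.1⟩
      have h2 : Gᶜ.Adj w v := (G.compl_adj w v).mpr ⟨hwv, fun ha => hcon.2 ha.symm⟩
      have : Gᶜ.dist u v ≤ 2 := by
        have := Gᶜ.dist_le (SimpleGraph.Walk.cons h1 (SimpleGraph.Walk.cons h2 SimpleGraph.Walk.nil))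
        simpa using this
      omega
    have htri : ∀ a b c : V, G.Adj a b → G.Adj a c → G.Adj b c → False := by
      intro a b c hab hac hbc
      exact htf {a, b, c} (SimpleGraph.is3Clique_triple_iff.mpr ⟨hab, hac, hbc⟩)
    refine ⟨⟨fun w => if G.Adj u w then 0 else 1, ?_⟩⟩
    intro a b hab hc
    by_cases ha : G.Adj u a <;> by_cases hb : G.Adj u b <;> simp [ha, hb] at hc
    · exact htri u a b ha hb hab
    · -- both not adjacent to u
      have hau : a ≠ u := fun h => hb (h ▸ hab)
      have hbu : b ≠ u := fun h => ha (h ▸ hab.symm)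
      have hav : a ≠ v := fun h => ha (h ▸ hadj)
      have hbv : b ≠ v := fun h => hb (h ▸ hadj)
      have h1 := (hkey a hau hav).resolve_left ha
      have h2 := (hkey b hbu hbv).resolve_left hb
      exact htri v a b h1 h2 hab
end

section
/- Let G be a triangle-free finite simple graph of diameter 3 with a cut vertex x, let C be the unique nontrivial component of G - x, let C(x) be the set of vertices of C adjacent to x, let C(∅) be the set of vertices of C not adjacent to x, and let T be the set of vertices forming trivial components of G - x. If the complement of G has diameter 3, then G is bipartite with parts C(∅) ∪ {x} and C(x) ∪ T. -/
/-- `G` triangle-free, `diam(G) = 3`, `diam(Gᶜ) = 3`, `x` a cut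
vertex, `C` the unique nontrivial component of `G - x`. With `C(x)` the vertices
of `C` adjacent to `x`, `C(∅)` those not adjacent to `x`, and `T` the trivial
components of `G - x`, the graph `G` is bipartite with parts `C(∅) ∪ {x}` and
`C(x) ∪ T`. -/
theorem stmt13 {V : Type*} [Fintype V] (G : SimpleGraph V)
    (htf : G.CliqueFree 3) (hdiam : G.diam = 3) (hdiamc : Gᶜ.diam = 3)
    (x : V) (hcut : ¬ (G.induce ({x}ᶜ : Set V)).Connected)
    (c : (G.induce ({x}ᶜ : Set V)).ConnectedComponent)
    (hc : ∃ p q : ({x}ᶜ : Set V), (G.induce ({x}ᶜ : Set V)).Adj p q ∧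
      (G.induce ({x}ᶜ : Set V)).connectedComponentMk p = c)
    (huniq : ∀ p q : ({x}ᶜ : Set V), (G.induce ({x}ᶜ : Set V)).Adj p q →
      (G.induce ({x}ᶜ : Set V)).connectedComponentMk p = c)
    (C : Set V)
    (hC : C = {v | ∃ hv : v ∈ ({x}ᶜ : Set V),
      (G.induce ({x}ᶜ : Set V)).connectedComponentMk ⟨v, hv⟩ = c})
    (T : Set V) (hT : T = {v | v ≠ x ∧ v ∉ C})
    (P₁ P₂ : Set V)
    (hP₁ : P₁ = {v | v ∈ C ∧ ¬ G.Adj x v} ∪ {x})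
    (hP₂ : P₂ = {v | v ∈ C ∧ G.Adj x v} ∪ T) :
    Disjoint P₁ P₂ ∧ P₁ ∪ P₂ = Set.univ ∧
    ∀ u v : V, G.Adj u v → (u ∈ P₁ ∧ v ∈ P₂) ∨ (u ∈ P₂ ∧ v ∈ P₁) := by
  classical
  -- triangle-freeness in convenient form
  have htri : ∀ u v w : V, G.Adj u v → G.Adj u w → G.Adj v w → False := by
    intro u v w h1 h2 h3
    exact htf {u, v, w} (SimpleGraph.is3Clique_triple_iff.mpr ⟨h1, h2, h3⟩)
  -- members of C are ≠ x
  have hCne : ∀ v ∈ C, v ≠ x := by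
    intro v hv
    rw [hC] at hv
    obtain ⟨hv, -⟩ := hv
    simpa using hv
  -- trivial component vertices have only neighbor x
  have trivT : ∀ t, t ≠ x → t ∉ C → ∀ w, G.Adj t w → w = x := by
    intro t htx htC w hadj
    by_contra hwx
    have ht' : t ∈ ({x}ᶜ : Set V) := by simpa using htx
    have hw' : w ∈ ({x}ᶜ : Set V) := by simpa using hwx
    have hadj' : (G.induce ({x}ᶜ : Set V)).Adj ⟨t, ht'⟩ ⟨w, hw'⟩ := by
      simpa using hadj
    have := huniq ⟨t, ht'⟩ ⟨w, hw'⟩ hadj'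
    exact htC (by rw [hC]; exact ⟨ht', this⟩)
  -- existence of a trivial component vertex
  have hT0 : ∃ t : V, t ≠ x ∧ t ∉ C := by
    by_contra h
    push_neg at h
    apply hcut
    obtain ⟨p0, q0, -, -⟩ := hc
    haveI : Nonempty ({x}ᶜ : Set V) := ⟨p0⟩
    refine ⟨fun p q => ?_⟩
    have hp : (p : V) ∈ C := h p (Set.mem_compl_singleton_iff.mp p.2)
    have hq : (q : V) ∈ C := h q (Set.mem_compl_singleton_iff.mp q.2)
    rw [hC] at hp hq
    obtain ⟨hp1, hp2⟩ := hp
    obtain ⟨hq1, hq2⟩ := hq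
    have hp2' : (G.induce ({x}ᶜ : Set V)).connectedComponentMk p = c := by
      convert hp2 using 2
    have hq2' : (G.induce ({x}ᶜ : Set V)).connectedComponentMk q = c := by
      convert hq2 using 2
    exact SimpleGraph.ConnectedComponent.exact (hp2'.trans hq2'.symm)
  obtain ⟨t, htx, htC⟩ := hT0
  have htadj : ∀ w, G.Adj t w → w = x := trivT t htx htC
  -- the pair realizing the diameter of the complement
  haveI : Nonempty V := ⟨x⟩
  obtain ⟨a, b, hab⟩ := Gᶜ.exists_dist_eq_diam (α := V)
  rw [hdiamc] at hab
  have hane : a ≠ b := by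
    rintro rfl
    simp [SimpleGraph.dist_self] at hab
  have hGab : G.Adj a b := by
    by_contra h
    have hc' : Gᶜ.Adj a b := by rw [SimpleGraph.compl_adj]; exact ⟨hane, h⟩
    rw [SimpleGraph.dist_eq_one_iff_adj.mpr hc'] at hab
    omega
  have hdom : ∀ v : V, v ≠ a → v ≠ b → G.Adj a v ∨ G.Adj b v := by
    intro v hva hvb
    by_contra h
    push_neg at h
    have h1 : Gᶜ.Adj a v := by
      rw [SimpleGraph.compl_adj]; exact ⟨Ne.symm hva, fun hh => h.1 hh⟩
    have h2 : Gᶜ.Adj v b := by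
      rw [SimpleGraph.compl_adj]; exact ⟨hvb, fun hh => h.2 hh.symm⟩
    have := SimpleGraph.dist_le (SimpleGraph.Walk.cons h1
      (SimpleGraph.Walk.cons h2 SimpleGraph.Walk.nil))
    simp at this
    omega
  -- x is an endpoint of the dominating edge
  have hx : a = x ∨ b = x := by
    by_cases hta : t = a
    · right; exact htadj b (hta ▸ hGab)
    by_cases htb : t = b
    · left; exact htadj a (htb ▸ hGab.symm)
    rcases hdom t hta htb with h | h
    · left; exact htadj a h.symm
    · right; exact htadj b h.symm
  -- no edge inside C(∅)
  have noCE : ∀ u v, u ∈ C → v ∈ C → ¬G.Adj x u → ¬G.Adj x v → ¬G.Adj u v := by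
    intro u v huC hvC hxu hxv hadj
    have key : ∀ y : V, G.Adj x y →
        (∀ w : V, w ≠ x → w ≠ y → G.Adj x w ∨ G.Adj y w) → False := by
      intro y hxy hdo
      have hux : u ≠ x := hCne u huC
      have hvx : v ≠ x := hCne v hvC
      have huy : u ≠ y := by rintro rfl; exact hxu hxy
      have hvy : v ≠ y := by rintro rfl; exact hxv hxy
      have h1 : G.Adj y u := (hdo u hux huy).resolve_left hxu
      have h2 : G.Adj y v := (hdo v hvx hvy).resolve_left hxv
      exact htri y u v h1 h2 hadj
    rcases hx with rfl | rfl
    · exact key b hGab fun w h1 h2 => hdom w h1 h2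
    · exact key a hGab.symm fun w h1 h2 => (hdom w h2 h1).symm
  -- membership helpers
  have hxP₁ : x ∈ P₁ := by rw [hP₁]; right; rfl
  have hTP₂ : ∀ v, v ≠ x → v ∉ C → v ∈ P₂ := by
    intro v h1 h2; rw [hP₂]; right; rw [hT]; exact ⟨h1, h2⟩
  have hCaP₂ : ∀ v ∈ C, G.Adj x v → v ∈ P₂ := by
    intro v h1 h2; rw [hP₂]; left; exact ⟨h1, h2⟩
  have hCnP₁ : ∀ v ∈ C, ¬G.Adj x v → v ∈ P₁ := by
    intro v h1 h2; rw [hP₁]; left; exact ⟨h1, h2⟩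
  refine ⟨?_, ?_, ?_⟩
  · rw [Set.disjoint_left]
    intro v hv1 hv2
    rw [hP₁] at hv1
    rw [hP₂, hT] at hv2
    rcases hv1 with ⟨hvC, hvn⟩ | hvx
    · rcases hv2 with ⟨-, hva⟩ | ⟨-, hvC'⟩
      · exact hvn hva
      · exact hvC' hvC
    · have hvx' : v = x := hvx
      rcases hv2 with ⟨hvC, -⟩ | ⟨hne, -⟩
      · exact hCne v hvC hvx'
      · exact hne hvx'
  · apply Set.eq_univ_of_forall
    intro v
    by_cases hvx : v = x
    · left; rw [hP₁]; right; exact hvx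
    by_cases hvC : v ∈ C
    · by_cases hva : G.Adj x v
      · right; exact hCaP₂ v hvC hva
      · left; exact hCnP₁ v hvC hva
    · right; exact hTP₂ v hvx hvC
  · intro u v hadj
    by_cases hux : u = x
    · subst hux
      left
      refine ⟨hxP₁, ?_⟩
      by_cases hvC : v ∈ C
      · exact hCaP₂ v hvC hadj
      · exact hTP₂ v hadj.ne' hvC
    by_cases hvx : v = x
    · subst hvx
      right
      refine ⟨?_, hxP₁⟩
      by_cases huC : u ∈ C
      · exact hCaP₂ u huC hadj.symm
      · exact hTP₂ u hadj.ne huC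
    by_cases huC : u ∈ C
    · by_cases hvC : v ∈ C
      · by_cases hxu : G.Adj x u
        · by_cases hxv : G.Adj x v
          · exact absurd hadj fun _ => htri x u v hxu hxv hadj
          · exact Or.inr ⟨hCaP₂ u huC hxu, hCnP₁ v hvC hxv⟩
        · by_cases hxv : G.Adj x v
          · exact Or.inl ⟨hCnP₁ u huC hxu, hCaP₂ v hvC hxv⟩
          · exact absurd hadj (noCE u v huC hvC hxu hxv)
      · -- v ∈ T, edge to u ≠ x impossible
        exact absurd (trivT v hvx hvC u hadj.symm) hux
    · exact absurd (trivT u hux huC v hadj) hvx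
end

section
/- Let G be a triangle-free finite simple graph of diameter 3 whose complement also has diameter 3, let S be an independent cut set of G, and suppose u, v are vertices with distance exactly 3 in the complement of G. Then at least one of u, v belongs to S. -/
namespace SimpleGraph

variable {V : Type*} {G : SimpleGraph V} {s : Set V}

lemma compl_adj_of_not_reachable_induce {a b : s} (h : ¬(G.induce s).Reachable a b) :
    Gᶜ.Adj a b :=
  have hadj : (G.induce s)ᶜ.Adj a b := ((G.induce s).reachable_or_compl_adj a b).resolve_left h
  ⟨Subtype.val_injective.ne hadj.1, hadj.2⟩

/-- Vertices in different components of `G[s]` are adjacent in `Gᶜ`; vertices in the same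
component have a common `Gᶜ`-neighbour in any other component. -/
lemma compl_dist_le_two_of_not_connected_induce (hs : ¬(G.induce s).Connected)
    {u v : V} (hu : u ∈ s) (hv : v ∈ s) : Gᶜ.dist u v ≤ 2 := by
  obtain ⟨w, huw⟩ : ∃ w, ¬(G.induce s).Reachable ⟨u, hu⟩ w := by
    rw [connected_iff_exists_forall_reachable] at hs
    exact not_forall.mp (not_exists.mp hs ⟨u, hu⟩)
  by_cases huv : (G.induce s).Reachable ⟨u, hu⟩ ⟨v, hv⟩
  · have hwv : ¬(G.induce s).Reachable w ⟨v, hv⟩ := fun hwv => huw (huv.trans hwv.symm)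
    exact dist_le (.cons (compl_adj_of_not_reachable_induce huw)
      (.cons (compl_adj_of_not_reachable_induce hwv) .nil))
  · rw [dist_eq_one_iff_adj.mpr (compl_adj_of_not_reachable_induce huv)]
    omega

end SimpleGraph

theorem stmt16_general {V : Type*} (G : SimpleGraph V)
    (S : Set V) (hcut : ¬ (G.induce (Sᶜ : Set V)).Connected)
    (u v : V) (huv : Gᶜ.dist u v = 3) :
    u ∈ S ∨ v ∈ S := by
  by_contra! h
  have hdist := SimpleGraph.compl_dist_le_two_of_not_connected_induce hcut h.1 h.2
  omega

/-- `G` triangle-free with `diam(G) = diam(Gᶜ) = 3`, `S` an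
independent cut set of `G`, and `u, v` at distance exactly 3 in `Gᶜ`. Then at
least one of `u, v` lies in `S`. -/
theorem stmt16 {V : Type*} [Fintype V] (G : SimpleGraph V)
    (htf : G.CliqueFree 3) (hdiam : G.diam = 3) (hdiamc : Gᶜ.diam = 3)
    (S : Set V) (hcut : ¬ (G.induce (Sᶜ : Set V)).Connected)
    (hind : ∀ a ∈ S, ∀ b ∈ S, ¬ G.Adj a b)
    (u v : V) (huv : Gᶜ.dist u v = 3) :
    u ∈ S ∨ v ∈ S :=
  stmt16_general G S hcut u v huv
end

section
/- Let G be a triangle-free finite simple graph and let S be a minimum cut set of G containing at least one edge of G. Then G - S has no trivial components, i.e., every component of G - S contains at least one edge. -/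
/-- Isolated vertex: reachable implies equal. -/
lemma iso_reach {V : Type*} {G : SimpleGraph V} {p q : V}
    (h : ∀ r, ¬ G.Adj p r) (hr : G.Reachable p q) : p = q := by
  obtain ⟨w⟩ := hr
  cases w with
  | nil => rfl
  | cons h' _ => exact absurd h' (h _)

/-- If `G` is a connected triangle-free graph and `S` is a minimum
cut set containing an edge of `G`, then `G - S` has no trivial components: every
vertex of `G - S` has a neighbor in `G - S`. -/
theorem stmt17 {V : Type*} [Fintype V] [DecidableEq V] (G : SimpleGraph V)
    (htf : G.CliqueFree 3) (hG : G.Connected) (S : Finset V)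
    (hcut : ¬ (G.induce ((↑S : Set V)ᶜ)).Connected)
    (hmin : ∀ T : Finset V, ¬ (G.induce ((↑T : Set V)ᶜ)).Connected →
      S.card ≤ T.card)
    (hedge : ∃ a ∈ S, ∃ b ∈ S, G.Adj a b) :
    ∀ p : ((↑S : Set V)ᶜ : Set V), ∃ q : ((↑S : Set V)ᶜ : Set V),
      (G.induce ((↑S : Set V)ᶜ)).Adj p q := by
  classical
  intro p
  by_contra hcon
  push_neg at hcon
  -- all neighbors of p are in S
  have hNS : ∀ r : V, G.Adj (↑p) r → r ∈ S := by
    intro r hr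
    by_contra hrS
    exact hcon ⟨r, by simpa using hrS⟩ hr
  set T : Finset V := G.neighborFinset (↑p) with hT
  have hTS : T ⊆ S := by
    intro r hr
    exact hNS r (by simpa [hT] using hr)
  -- find q ∈ Sᶜ, q ≠ p
  have hne : ¬ (G.induce ((↑S : Set V)ᶜ)).Preconnected ∨
      IsEmpty ((↑S : Set V)ᶜ : Set V) := by
    by_contra h
    push_neg at h
    exact hcut ((SimpleGraph.connected_iff _).mpr ⟨h.1, h.2⟩)
  have hq : ∃ q : ((↑S : Set V)ᶜ : Set V), q ≠ p := by
    rcases hne with h | h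
    · simp only [SimpleGraph.Preconnected] at h
      push_neg at h
      obtain ⟨u, v, huv⟩ := h
      rcases eq_or_ne u p with rfl | hup
      · exact ⟨v, fun hv => huv (hv ▸ SimpleGraph.Reachable.refl _)⟩
      · exact ⟨u, hup⟩
    · exact (h.false p).elim
  obtain ⟨q, hqp⟩ := hq
  -- T is a cut set
  have hpT : (↑p : V) ∈ ((↑T : Set V)ᶜ : Set V) := by
    simp [hT]
  have hqT : (↑q : V) ∈ ((↑T : Set V)ᶜ : Set V) := by
    have : (↑q : V) ∉ S := fun h => q.2 (Finset.mem_coe.mpr h)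
    simpa using fun hq' => this (hTS hq')
  have hTcut : ¬ (G.induce ((↑T : Set V)ᶜ)).Connected := by
    intro hc
    have hiso : ∀ r : ((↑T : Set V)ᶜ : Set V),
        ¬ (G.induce ((↑T : Set V)ᶜ)).Adj ⟨↑p, hpT⟩ r := by
      rintro ⟨r, hr⟩ hadj
      have : G.Adj (↑p) r := hadj
      exact hr (by simpa [hT] using this)
    have hv := iso_reach hiso (hc.preconnected ⟨↑p, hpT⟩ ⟨↑q, hqT⟩)
    have hvq : (↑p : V) = ↑q := Subtype.mk_eq_mk.mp hv
    exact hqp (Subtype.ext hvq.symm)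
  have hcard := hmin T hTcut
  have hST : T = S := Finset.eq_of_subset_of_card_le hTS hcard
  obtain ⟨a, ha, b, hb, hab⟩ := hedge
  have hpa : G.Adj (↑p) a := by
    have : a ∈ T := hST ▸ ha
    simpa [hT] using this
  have hpb : G.Adj (↑p) b := by
    have : b ∈ T := hST ▸ hb
    simpa [hT] using this
  exact htf {↑p, a, b} (SimpleGraph.is3Clique_triple_iff.2 ⟨hpa, hpb, hab⟩)
end
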